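/- arXiv:2411.08319 — 2 statements merged into one kernel-verified Lean document; each statement's English description precedes it below -/
import Mathlib

section
/- For a nontrivial core quandle Core(G) (i.e., G is not an elementary abelian 2-group), the quandle Euler characteristic equals 0. -/
/-- A quandle: a set with point symmetries `s x` (bijections) such that
`s x x = x` and `s x ∘ s y = s (s x y) ∘ s x`. -/
structure QuandleStr (X : Type*) where
  s : X → Equiv.Perm X
  fix : ∀ x, s x x = x
  dist : ∀ x y z, s x (s y z) = s (s x y) (s x z)

/-- The inner automorphism group of a quandle, generated by the point symmetries. -/
def QuandleStr.Inn {X : Type*} (Q : QuandleStr X) : Subgroup (Equiv.Perm X) :=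
  Subgroup.closure {g | ∃ x, g = Q.s x}

/-- The displacement group of a quandle, generated by `s x ∘ (s y)⁻¹`. -/
def QuandleStr.Dis {X : Type*} (Q : QuandleStr X) : Subgroup (Equiv.Perm X) :=
  Subgroup.closure {g | ∃ x y, g = Q.s x * (Q.s y)⁻¹}

/-- The quandle Euler characteristic: the infimum over the displacement group of the
number of fixed points. -/
noncomputable def QuandleStr.chi {X : Type*} (Q : QuandleStr X) : ℕ :=
  sInf {m | ∃ g ∈ Q.Dis, m = Nat.card {x : X // g x = x}}

/-- The point symmetry `s h : g ↦ h g⁻¹ h` of the core quandle. -/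
def coreS {G : Type*} [Group G] (h : G) : Equiv.Perm G where
  toFun g := h * g⁻¹ * h
  invFun g := h * g⁻¹ * h
  left_inv g := by group
  right_inv g := by group

/-- The core quandle `Core(G)` of a group `G`. -/
def Core (G : Type*) [Group G] : QuandleStr G where
  s := coreS
  fix x := by simp [coreS]
  dist x y z := by simp [coreS]; group

lemma coreS_inv {G : Type*} [Group G] (h : G) : (coreS h)⁻¹ = coreS h := by
  ext g; rfl

lemma gen_apply {G : Type*} [Group G] (a g : G) :
    ((Core G).s a * ((Core G).s 1)⁻¹) g = a * g * a := by
  simp only [Core, Equiv.Perm.mul_apply, coreS_inv]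
  simp [coreS]

lemma gen_mem {G : Type*} [Group G] (a : G) :
    (Core G).s a * ((Core G).s 1)⁻¹ ∈ (Core G).Dis :=
  Subgroup.subset_closure ⟨a, 1, rfl⟩

/-- for a nontrivial core quandle (i.e. `G` is not an elementary abelian
2-group, so some element has `g² ≠ 1`), the quandle Euler characteristic is `0`. -/
theorem chi_core_nontrivial {G : Type*} [Group G] (hG : ∃ g : G, g * g ≠ 1) :
    (Core G).chi = 0 := by
  obtain ⟨h, hh⟩ := hG
  have key : ∃ σ ∈ (Core G).Dis, ∀ g : G, σ g ≠ g := by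
    by_cases hcomm : ∀ x y : G, x * y = y * x
    · refine ⟨(Core G).s h * ((Core G).s 1)⁻¹, gen_mem h, fun g hg => ?_⟩
      rw [gen_apply] at hg
      apply hh
      have : g * (h * h) = g * 1 := by
        rw [mul_one]
        calc g * (h * h) = g * h * h := by rw [mul_assoc]
        _ = h * g * h := by rw [hcomm g h]
        _ = g := hg
      exact mul_left_cancel this
    · push_neg at hcomm
      obtain ⟨x, y, hxy⟩ := hcomm
      set σ : Equiv.Perm G :=
        ((Core G).s x * ((Core G).s 1)⁻¹) * ((Core G).s y * ((Core G).s 1)⁻¹) *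
          ((Core G).s (y*x)⁻¹ * ((Core G).s 1)⁻¹) with hσ
      have hσmem : σ ∈ (Core G).Dis :=
        mul_mem (mul_mem (gen_mem x) (gen_mem y)) (gen_mem (y*x)⁻¹)
      have hact : ∀ g : G, σ g = (x * y * x⁻¹ * y⁻¹) * g := by
        intro g
        rw [hσ]
        rw [Equiv.Perm.mul_apply, Equiv.Perm.mul_apply, gen_apply, gen_apply, gen_apply]
        group
      refine ⟨σ, hσmem, fun g hg => ?_⟩
      rw [hact] at hg
      have : x * y * x⁻¹ * y⁻¹ = 1 := by
        have h1 : x * y * x⁻¹ * y⁻¹ * g = 1 * g := by rw [one_mul]; exact hg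
        exact mul_right_cancel h1
      apply hxy
      calc x * y = (x * y * x⁻¹ * y⁻¹) * (y * x) := by group
      _ = 1 * (y * x) := by rw [this]
      _ = y * x := one_mul _
  obtain ⟨σ, hmem, hfix⟩ := key
  have : IsEmpty {x : G // σ x = x} := ⟨fun p => hfix p.1 p.2⟩
  refine Nat.sInf_eq_zero.mpr (Or.inl ⟨σ, hmem, ?_⟩)
  exact (Nat.card_of_isEmpty).symm
end

section
/- For the quandle V_n ×_d A obtained from a weighted graph with A finite, the quandle Euler characteristic equals #A times the minimum over elements (a_1,…,a_n) of the displacement group (viewed in A^n) of the number of indices i with a_i = 0. -/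
/-- The point symmetry `s (v,a) : (w,b) ↦ (w, d v w + b)` of the quandle obtained
from an `A`-weighted graph. -/
def graphS {V A : Type*} [AddGroup A] (d : V → V → A) (p : V × A) : Equiv.Perm (V × A) where
  toFun q := (q.1, d p.1 q.1 + q.2)
  invFun q := (q.1, -d p.1 q.1 + q.2)
  left_inv q := by simp
  right_inv q := by simp [← add_assoc]

/-- The quandle `V ×_d A` obtained from an `A`-weighted graph `(V, A, d)`. -/
def graphQuandle (V A : Type*) [AddCommGroup A] (d : V → V → A) (hd : ∀ v, d v v = 0) :
    QuandleStr (V × A) where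
  s := graphS d
  fix p := by cases p with | mk v a => simp [graphS, hd]
  dist p q r := by simp [graphS, add_left_comm]

/-- The translation permutation of `V × A` given by `a : V → A`:
`(v, b) ↦ (v, b + a v)`. -/
def transPerm {V A : Type*} [AddGroup A] (a : V → A) : Equiv.Perm (V × A) where
  toFun q := (q.1, q.2 + a q.1)
  invFun q := (q.1, q.2 - a q.1)
  left_inv q := by simp
  right_inv q := by simp

section Aux

variable {V A : Type*} [AddCommGroup A]

lemma transPerm_zero : transPerm (0 : V → A) = 1 := by
  ext q
  · simp [transPerm]
  · simp [transPerm]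

lemma transPerm_mul (a b : V → A) : transPerm a * transPerm b = transPerm (a + b) := by
  ext q
  · simp [transPerm]
  · simp [transPerm, add_comm, add_left_comm]

lemma transPerm_inv (a : V → A) : (transPerm a)⁻¹ = transPerm (-a) := by
  symm
  rw [eq_inv_iff_mul_eq_one, transPerm_mul]
  simp [transPerm_zero]

lemma graphS_eq_transPerm (d : V → V → A) (p : V × A) :
    graphS d p = transPerm (d p.1) := by
  ext q
  · simp [graphS, transPerm]
  · simp [graphS, transPerm, add_comm]

/-- The subgroup of translation permutations. -/
def transSubgroup (V A : Type*) [AddCommGroup A] : Subgroup (Equiv.Perm (V × A)) where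
  carrier := Set.range transPerm
  mul_mem' := by
    rintro _ _ ⟨a, rfl⟩ ⟨b, rfl⟩
    exact ⟨a + b, (transPerm_mul a b).symm⟩
  one_mem' := ⟨0, transPerm_zero⟩
  inv_mem' := by
    rintro _ ⟨a, rfl⟩
    exact ⟨-a, (transPerm_inv a).symm⟩

lemma dis_mem_range (d : V → V → A) (hd : ∀ v, d v v = 0)
    {g : Equiv.Perm (V × A)} (hg : g ∈ (graphQuandle V A d hd).Dis) :
    ∃ a : V → A, g = transPerm a := by
  have h : (graphQuandle V A d hd).Dis ≤ transSubgroup V A := by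
    rw [QuandleStr.Dis, Subgroup.closure_le]
    rintro _ ⟨x, y, rfl⟩
    exact mul_mem ⟨d x.1, (graphS_eq_transPerm d x).symm⟩
      (inv_mem ⟨d y.1, (graphS_eq_transPerm d y).symm⟩)
  obtain ⟨a, ha⟩ := h hg
  exact ⟨a, ha.symm⟩

end Aux

lemma card_fix_transPerm {n : ℕ} {A : Type*} [Fintype A] [AddCommGroup A]
    [DecidableEq A] (a : Fin n → A) :
    Nat.card {x : Fin n × A // transPerm a x = x}
      = Fintype.card A * (Finset.univ.filter fun i : Fin n => a i = 0).card := by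
  have hiff : ∀ x : Fin n × A, transPerm a x = x ↔ a x.1 = 0 := by
    intro x
    constructor
    · intro h
      have := congrArg Prod.snd h
      simpa [transPerm] using this
    · intro h
      cases x with | mk v b => simp [transPerm, h]
  have e : {x : Fin n × A // transPerm a x = x} ≃ {v : Fin n // a v = 0} × A :=
    { toFun := fun x => (⟨x.1.1, (hiff x.1).mp x.2⟩, x.1.2)
      invFun := fun y => ⟨(y.1.1, y.2), (hiff _).mpr y.1.2⟩
      left_inv := fun x => by ext <;> rfl
      right_inv := fun y => by ext <;> rfl }
  rw [Nat.card_eq_fintype_card, Fintype.card_congr e, Fintype.card_prod,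
    Fintype.card_subtype, mul_comm]

/-- for a finite abelian group `A`, the quandle Euler characteristic of
`V_n ×_d A` equals `#A` times the minimum, over elements `a ∈ A^n` of the displacement
group (viewed in `A^n` via translation permutations), of the number of indices `i` with
`a i = 0`. -/
theorem chi_graph_quandle (n : ℕ) (A : Type*) [Fintype A] [AddCommGroup A]
    [DecidableEq A] (d : Fin n → Fin n → A) (hd : ∀ v, d v v = 0) :
    (graphQuandle (Fin n) A d hd).chi
      = Fintype.card A *
        sInf {m : ℕ | ∃ a : Fin n → A,
          transPerm a ∈ (graphQuandle (Fin n) A d hd).Dis ∧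
          m = (Finset.univ.filter fun i : Fin n => a i = 0).card} := by
  classical
  set Q := graphQuandle (Fin n) A d hd with hQ
  set c := Fintype.card A with hc
  set S : Set ℕ := {m : ℕ | ∃ a : Fin n → A,
    transPerm a ∈ Q.Dis ∧
    m = (Finset.univ.filter fun i : Fin n => a i = 0).card} with hS
  have hSne : S.Nonempty := by
    refine ⟨(Finset.univ.filter fun i : Fin n => (0 : Fin n → A) i = 0).card, 0, ?_, rfl⟩
    rw [transPerm_zero]
    exact one_mem _
  have hTeq : {m | ∃ g ∈ Q.Dis, m = Nat.card {x : Fin n × A // g x = x}}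
      = {m : ℕ | ∃ a : Fin n → A, transPerm a ∈ Q.Dis ∧
          m = c * (Finset.univ.filter fun i : Fin n => a i = 0).card} := by
    ext m
    constructor
    · rintro ⟨g, hg, rfl⟩
      obtain ⟨a, rfl⟩ := dis_mem_range d hd hg
      exact ⟨a, hg, card_fix_transPerm a⟩
    · rintro ⟨a, ha, rfl⟩
      exact ⟨transPerm a, ha, (card_fix_transPerm a).symm⟩
  rw [QuandleStr.chi, hTeq]
  have hTne : {m : ℕ | ∃ a : Fin n → A, transPerm a ∈ Q.Dis ∧
      m = c * (Finset.univ.filter fun i : Fin n => a i = 0).card}.Nonempty := by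
    obtain ⟨m, a, ha, hm⟩ := hSne
    exact ⟨c * m, a, ha, by rw [hm]⟩
  apply le_antisymm
  · obtain ⟨a, ha, hm⟩ := Nat.sInf_mem hSne
    exact Nat.sInf_le ⟨a, ha, by rw [hm]⟩
  · refine le_csInf hTne ?_
    rintro m ⟨a, ha, rfl⟩
    exact Nat.mul_le_mul_left c (Nat.sInf_le ⟨a, ha, rfl⟩)
end
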